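/- For every integer n ≥ 2 and every x, one has (1/(n+1))·g_n(x)·g_{n+1}'(x) − (1/n)·g_n'(x)·g_{n+1}(x) = (−x)^{n−1}. -/

import Mathlib

/-!
The polynomials `g_n` are the Lucas companions `g_n = f_n + X f_{n-2}` of the Fibonacci polynomials
`f_{n+2} = f_{n+1} + X f_n`, `f_0 = f_1 = 1`, whose coefficients are `binom(n-k, k)`; moreover
`g_n' = n f_{n-2}`. Hence the expression reduces to `g_n f_{n-1} - f_{n-2} g_{n+1}`, which the
Fibonacci recurrence turns into the Cassini identity `f_{n-1}² - f_{n-2} f_n = (-X)^{n-1}`.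
-/

open Polynomial

/-- The polynomial `g_n(x) = Σ_{k=0}^{⌊n/2⌋} (n/(n−k))·binom(n−k, k)·x^k` over ℚ
for `n ≥ 1`, with `g_0 = 2`. -/
noncomputable def gP (n : ℕ) : Polynomial ℚ :=
  if n = 0 then C 2
  else ∑ k ∈ Finset.range (n / 2 + 1),
    C ((n : ℚ) / ((n : ℚ) - (k : ℚ)) * (((n - k).choose k : ℕ) : ℚ)) * X ^ k

noncomputable def fibPoly (R : Type*) [Semiring R] : ℕ → R[X]
  | 0 => 1
  | 1 => 1
  | n + 2 => fibPoly R (n + 1) + X * fibPoly R n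

section fibPoly

variable (R : Type*)

theorem fibPoly_add_two [Semiring R] (n : ℕ) :
    fibPoly R (n + 2) = fibPoly R (n + 1) + X * fibPoly R n := by
  rw [fibPoly]

theorem coeff_fibPoly [Semiring R] (n k : ℕ) :
    (fibPoly R n).coeff k = ((n - k).choose k : R) := by
  induction n using Nat.twoStepInduction generalizing k with
  | zero => cases k <;> simp [fibPoly, coeff_one]
  | one => rcases k with _ | _ | k <;> simp [fibPoly, coeff_one]
  | more n ih₀ ih₁ =>
    rw [fibPoly_add_two, coeff_add]
    rcases k with _ | j
    · simp [ih₁]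
    rw [coeff_X_mul, ih₀, ih₁]
    rcases le_or_gt j n with hj | hj
    · rw [show n + 2 - (j + 1) = n - j + 1 by omega, show n + 1 - (j + 1) = n - j by omega,
        Nat.choose_succ_succ', Nat.cast_add, add_comm]
    · rw [show n + 2 - (j + 1) = 0 by omega, show n + 1 - (j + 1) = 0 by omega,
        show n - j = 0 by omega, Nat.choose_zero_succ, Nat.choose_eq_zero_of_lt (by omega : 0 < j)]
      simp

theorem coeff_fibPoly_eq_zero_of_lt [Semiring R] {n k : ℕ} (h : n < 2 * k) :
    (fibPoly R n).coeff k = 0 := by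
  rw [coeff_fibPoly, Nat.choose_eq_zero_of_lt (by omega), Nat.cast_zero]

theorem fibPoly_cassini [CommRing R] (m : ℕ) :
    fibPoly R (m + 1) ^ 2 - fibPoly R m * fibPoly R (m + 2) = (-X) ^ (m + 1) := by
  induction m with
  | zero => simp [fibPoly]
  | succ m ih =>
    rw [fibPoly_add_two R (m + 1), fibPoly_add_two R m] at *
    linear_combination (-X) * ih

end fibPoly

theorem Nat.cast_add_one_mul_choose {R : Type*} [Semiring R] (d j : ℕ) :
    ((j : R) + 1) * ((d + 1).choose (j + 1) : ℕ) = ((d : R) + 1) * (d.choose j : ℕ) := by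
  have h : (j + 1) * (d + 1).choose (j + 1) = (d + 1) * d.choose j := by
    rw [mul_comm, Nat.add_one_mul_choose_eq]
  exact_mod_cast congrArg (Nat.cast : ℕ → R) h

theorem coeff_gP (n k : ℕ) (hn : n ≠ 0) :
    (gP n).coeff k = (n : ℚ) / ((n : ℚ) - (k : ℚ)) * (((n - k).choose k : ℕ) : ℚ) := by
  rw [gP, if_neg hn, finsetSum_coeff]
  simp only [coeff_C_mul, coeff_X_pow, mul_ite, mul_one, mul_zero]
  rw [Finset.sum_ite_eq]
  split_ifs with hk
  · rfl
  · rw [Finset.mem_range, not_lt] at hk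
    rw [Nat.choose_eq_zero_of_lt (by omega), Nat.cast_zero, mul_zero]

theorem coeff_gP_eq_zero_of_lt {n k : ℕ} (h : n < 2 * k) : (gP n).coeff k = 0 := by
  rcases eq_or_ne n 0 with rfl | hn
  · rw [gP, if_pos rfl, coeff_C, if_neg (by omega)]
  · rw [coeff_gP _ _ hn, Nat.choose_eq_zero_of_lt (by omega), Nat.cast_zero, mul_zero]

theorem coeff_gP_add_two_succ (d j : ℕ) :
    (gP (d + j + 2)).coeff (j + 1) = ((d + j : ℚ) + 2) / (d + 1) * (d + 1).choose (j + 1) := by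
  rw [coeff_gP _ _ (by omega), show d + j + 2 - (j + 1) = d + 1 by omega]
  push_cast
  ring

theorem gP_add_two (n : ℕ) : gP (n + 2) = fibPoly ℚ (n + 2) + X * fibPoly ℚ n := by
  ext k
  rcases k with _ | j
  · have : ((n : ℚ) + 2) ≠ 0 := by positivity
    simp [coeff_gP, coeff_fibPoly, this]
  rw [coeff_add, coeff_X_mul]
  rcases le_or_gt j n with hj | hj
  · obtain ⟨d, rfl⟩ : ∃ d, n = d + j := ⟨n - j, by omega⟩
    rw [coeff_gP_add_two_succ, coeff_fibPoly, coeff_fibPoly,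
      show d + j + 2 - (j + 1) = d + 1 by omega, Nat.add_sub_cancel]
    have := Nat.cast_add_one_mul_choose (R := ℚ) d j
    field_simp
    linear_combination this
  · rw [coeff_gP_eq_zero_of_lt (by omega), coeff_fibPoly_eq_zero_of_lt ℚ (by omega),
      coeff_fibPoly_eq_zero_of_lt ℚ (by omega), add_zero]

theorem derivative_gP_add_two (n : ℕ) :
    derivative (gP (n + 2)) = C ((n : ℚ) + 2) * fibPoly ℚ n := by
  ext j
  rw [coeff_derivative, coeff_C_mul]
  rcases le_or_gt j n with hj | hj
  · obtain ⟨d, rfl⟩ : ∃ d, n = d + j := ⟨n - j, by omega⟩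
    rw [coeff_gP_add_two_succ, coeff_fibPoly, Nat.add_sub_cancel]
    have := Nat.cast_add_one_mul_choose (R := ℚ) d j
    push_cast
    field_simp
    linear_combination this
  · rw [coeff_gP_eq_zero_of_lt (by omega), coeff_fibPoly_eq_zero_of_lt ℚ (by omega), zero_mul,
      mul_zero]

theorem g_wronskian (n : ℕ) (hn : 2 ≤ n) (x : ℚ) :
    (1 / ((n : ℚ) + 1)) * (gP n).eval x * (derivative (gP (n + 1))).eval x
      - (1 / (n : ℚ)) * (derivative (gP n)).eval x * (gP (n + 1)).eval x
      = (-x) ^ (n - 1) := by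
  obtain ⟨m, rfl⟩ : ∃ m, n = m + 2 := ⟨n - 2, by omega⟩
  have cassini := congrArg (eval x) (fibPoly_cassini ℚ m)
  rw [show m + 2 + 1 = m + 1 + 2 by ring, derivative_gP_add_two, derivative_gP_add_two,
    gP_add_two, gP_add_two, fibPoly_add_two ℚ (m + 1), fibPoly_add_two ℚ m]
  rw [fibPoly_add_two ℚ m] at cassini
  simp only [eval_add, eval_mul, eval_sub, eval_pow, eval_neg, eval_X, eval_C] at cassini ⊢
  rw [show m + 2 - 1 = m + 1 by omega]
  push_cast
  field_simp
  linear_combination ((m : ℚ) + 3) * cassini
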